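/- arXiv:1008.3743 — 4 statements merged into one kernel-verified Lean document; each statement's English description precedes it below -/
import Mathlib

section
/- Let (α, ≤) be a lattice (with binary meet ⊓) and let D1, D2 ⊆ α be finite sets. Then reduce({t1 ⊓ t2 | t1 ∈ D1, t2 ∈ D2}) is a greatest lower bound of D1 and D2 with respect to the Hoare order ⊑: it is Hoare-dominated by both D1 and D2, and every set D' ⊆ α with D' ⊑ D1 and D' ⊑ D2 satisfies D' ⊑ reduce({t1 ⊓ t2 | t1 ∈ D1, t2 ∈ D2}). -/
/-!
The meets `t₁ ⊓ t₂` are Hoare-below both `D1` and `D2`, and any `t` lying below some `t₁ ∈ D1`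
and some `t₂ ∈ D2` lies below their meet. Passing to `reduce` loses nothing, because in a finite
set every element lies below a maximal one.
-/

def hoare {α : Type*} [Preorder α] (D1 D2 : Set α) : Prop :=
  ∀ t1 ∈ D1, ∃ t2 ∈ D2, t1 ≤ t2

def reduce {α : Type*} [Preorder α] (D : Set α) : Set α :=
  {t ∈ D | ∀ t' ∈ D, t ≤ t' → t = t'}

section Preorder

variable {α : Type*} [Preorder α] {D D1 D2 D3 : Set α}

theorem hoare_of_subset (h : D1 ⊆ D2) : hoare D1 D2 :=
  fun t ht => ⟨t, h ht, le_rfl⟩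

theorem hoare.trans (h12 : hoare D1 D2) (h23 : hoare D2 D3) : hoare D1 D3 := by
  intro t ht
  obtain ⟨u, hu, htu⟩ := h12 t ht
  obtain ⟨v, hv, huv⟩ := h23 u hu
  exact ⟨v, hv, htu.trans huv⟩

theorem reduce_subset : reduce D ⊆ D :=
  fun _ ht => ht.1

end Preorder

section PartialOrder

variable {α : Type*} [PartialOrder α] {D : Set α}

theorem mem_reduce_iff_maximal {t : α} : t ∈ reduce D ↔ Maximal (· ∈ D) t :=
  maximal_iff.symm

theorem Set.Finite.hoare_reduce (hD : D.Finite) : hoare D (reduce D) := by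
  intro t ht
  obtain ⟨b, htb, hb⟩ := hD.exists_le_maximal ht
  exact ⟨b, mem_reduce_iff_maximal.2 hb, htb⟩

end PartialOrder

section Lattice

variable {α : Type*} [Lattice α] {D' D1 D2 : Set α}

theorem hoare_image2_inf_left : hoare (Set.image2 (· ⊓ ·) D1 D2) D1 := by
  rintro _ ⟨t1, ht1, t2, -, rfl⟩
  exact ⟨t1, ht1, inf_le_left⟩

theorem hoare_image2_inf_right : hoare (Set.image2 (· ⊓ ·) D1 D2) D2 := by
  rintro _ ⟨t1, -, t2, ht2, rfl⟩
  exact ⟨t2, ht2, inf_le_right⟩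

theorem hoare_image2_inf (h1 : hoare D' D1) (h2 : hoare D' D2) :
    hoare D' (Set.image2 (· ⊓ ·) D1 D2) := by
  intro t ht
  obtain ⟨t1, ht1, hle1⟩ := h1 t ht
  obtain ⟨t2, ht2, hle2⟩ := h2 t ht
  exact ⟨t1 ⊓ t2, Set.mem_image2_of_mem ht1 ht2, le_inf hle1 hle2⟩

end Lattice

/-- For finite `D1, D2` in a lattice, the set
`reduce {t1 ⊓ t2 | t1 ∈ D1, t2 ∈ D2}` is a greatest lower bound of `D1` and
`D2` w.r.t. the Hoare order. -/
theorem reduce_meets_is_glb {α : Type*} [Lattice α]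
    (D1 D2 : Set α) (h1 : D1.Finite) (h2 : D2.Finite) :
    hoare (reduce {t : α | ∃ t1 ∈ D1, ∃ t2 ∈ D2, t = t1 ⊓ t2}) D1 ∧
    hoare (reduce {t : α | ∃ t1 ∈ D1, ∃ t2 ∈ D2, t = t1 ⊓ t2}) D2 ∧
    ∀ D' : Set α, hoare D' D1 → hoare D' D2 →
      hoare D' (reduce {t : α | ∃ t1 ∈ D1, ∃ t2 ∈ D2, t = t1 ⊓ t2}) := by
  have hmeets : {t : α | ∃ t1 ∈ D1, ∃ t2 ∈ D2, t = t1 ⊓ t2} = Set.image2 (· ⊓ ·) D1 D2 := by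
    ext t
    simp only [Set.mem_ofPred_eq, Set.mem_image2, eq_comm]
  rw [hmeets]
  have hfin : (Set.image2 (· ⊓ ·) D1 D2).Finite := h1.image2 _ h2
  exact ⟨(hoare_of_subset reduce_subset).trans hoare_image2_inf_left,
    (hoare_of_subset reduce_subset).trans hoare_image2_inf_right,
    fun _ hD1 hD2 => (hoare_image2_inf hD1 hD2).trans hfin.hoare_reduce⟩
end

section
/- Let A be a set of attributes, (L, ⪯) a partial order, and order tuples t : A → L pointwise. Fix an attribute A0 ∈ A and a value a ∈ L. Then the selection operator σ_{a⪯A0}(D) = {t ∈ D | a ⪯ t(A0)} is ⊑-monotone: for all sets of tuples D, D' with D ⊑ D', it holds that σ_{a⪯A0}(D) ⊑ σ_{a⪯A0}(D'). -/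
theorem hoare_inter_of_isUpperSet {α : Type*} [Preorder α] {D D' U : Set α}
    (h : hoare D D') (hU : IsUpperSet U) : hoare (D ∩ U) (D' ∩ U) := by
  rintro t ⟨htD, htU⟩
  obtain ⟨t', ht'D, hle⟩ := h t htD
  exact ⟨t', ⟨ht'D, hU hle htU⟩, hle⟩

/-- The selection operator `σ_{a ⪯ A0}` is ⊑-monotone, where tuples over
attributes `ι` with values in the partial order `L` are ordered pointwise. -/
theorem selection_dom_monotone {ι L : Type*} [PartialOrder L]
    (A0 : ι) (a : L) (D D' : Set (ι → L)) (h : hoare D D') :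
    hoare {t ∈ D | a ≤ t A0} {t ∈ D' | a ≤ t A0} :=
  hoare_inter_of_isUpperSet h ((isUpperSet_Ici a).preimage (Function.monotone_eval A0))
end

section
/- Let A be a set of attributes and (L, ⪯) a partial order with least element ⊥, and order tuples t : A → L pointwise. Fix attributes A1, A2 ∈ A. Then the join-selection operator σ_{A1⋈A2}(D) = {t ∈ D | there exists c ∈ L with c ≠ ⊥, c ⪯ t(A1), and c ⪯ t(A2)} is ⊑-monotone: for all sets of tuples D, D' with D ⊑ D', it holds that σ_{A1⋈A2}(D) ⊑ σ_{A1⋈A2}(D'). -/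
theorem hoare_sep_of_isUpperSet {α : Type*} [Preorder α] {p : α → Prop}
    (hp : IsUpperSet {a | p a}) {D D' : Set α} (h : hoare D D') :
    hoare {t ∈ D | p t} {t ∈ D' | p t} := by
  rintro t ⟨htD, hpt⟩
  obtain ⟨t', ht'D', hle⟩ := h t htD
  exact ⟨t', ⟨ht'D', hp hle hpt⟩, hle⟩

theorem isUpperSet_setOf_exists_le_apply_le_apply {ι L : Type*} [Preorder L] (P : L → Prop)
    (A1 A2 : ι) : IsUpperSet {t : ι → L | ∃ c, P c ∧ c ≤ t A1 ∧ c ≤ t A2} := by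
  rintro t t' hle ⟨c, hc, h1, h2⟩
  exact ⟨c, hc, h1.trans (hle A1), h2.trans (hle A2)⟩

/-- The join-selection operator `σ_{A1 ⋈ A2}` is ⊑-monotone, where tuples over
attributes `ι` with values in the partial order `L` (having a least element ⊥)
are ordered pointwise. -/
theorem join_selection_dom_monotone {ι L : Type*} [PartialOrder L] [OrderBot L]
    (A1 A2 : ι) (D D' : Set (ι → L)) (h : hoare D D') :
    hoare {t ∈ D | ∃ c : L, c ≠ ⊥ ∧ c ≤ t A1 ∧ c ≤ t A2}
          {t ∈ D' | ∃ c : L, c ≠ ⊥ ∧ c ≤ t A1 ∧ c ≤ t A2} :=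
  hoare_sep_of_isUpperSet (isUpperSet_setOf_exists_le_apply_le_apply (· ≠ ⊥) A1 A2) h
end

section
/- Let α be a set with a reflexive and symmetric binary relation ≈, let n ≥ 1, and consider records r : Fin n → Set α all of whose components are nonempty. Define the match relation M(r1, r2) iff there exists an index i with simS(r1(i), r2(i)), and the merge μ(r1, r2) as the componentwise union, μ(r1, r2)(i) = r1(i) ∪ r2(i). Then for all records r1, r2 with nonempty components: M(r1, r2) holds and μ(r1, r2) = r2 if and only if r1(i) ⊆ r2(i) for every index i. That is, Swoosh's merge domination coincides with componentwise set inclusion. -/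
/-- The similarity relation induced on sets by a similarity relation on
elements. -/
def simS {α : Type*} (sim : α → α → Prop) (S1 S2 : Set α) : Prop :=
  ∃ a1 ∈ S1, ∃ a2 ∈ S2, sim a1 a2

theorem simS_of_subset {α : Type*} {sim : α → α → Prop} (hrefl : ∀ a : α, sim a a)
    {S T : Set α} (hS : S.Nonempty) (hST : S ⊆ T) : simS sim S T :=
  let ⟨a, ha⟩ := hS
  ⟨a, ha, a, hST ha, hrefl a⟩

theorem merge_domination_iff_componentwise_subset_general {α : Type*}
    (sim : α → α → Prop)
    (hrefl : ∀ a : α, sim a a)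
    (n : ℕ) (hn : 1 ≤ n)
    (r1 r2 : Fin n → Set α)
    (h1 : ∀ i : Fin n, (r1 i).Nonempty) :
    ((∃ i : Fin n, simS sim (r1 i) (r2 i)) ∧
        (fun i : Fin n => r1 i ∪ r2 i) = r2) ↔
      ∀ i : Fin n, r1 i ⊆ r2 i := by
  -- the merge is the pointwise supremum `r1 ⊔ r2` in the lattice `Fin n → Set α`
  have merge_eq_iff : (fun i : Fin n => r1 i ∪ r2 i) = r2 ↔ ∀ i, r1 i ⊆ r2 i := sup_eq_right
  rw [merge_eq_iff, and_iff_right_iff_imp]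
  intro hsub
  let i : Fin n := ⟨0, hn⟩
  exact ⟨i, simS_of_subset hrefl (h1 i) (hsub i)⟩

/-- For records with nonempty components over a reflexive, symmetric
similarity relation, Swoosh's merge domination (`M r1 r2` holds and
`μ(r1,r2) = r2`, with `μ` the componentwise union) coincides with
componentwise set inclusion. -/
theorem merge_domination_iff_componentwise_subset {α : Type*}
    (sim : α → α → Prop)
    (hrefl : ∀ a : α, sim a a)
    (hsymm : ∀ a b : α, sim a b → sim b a)
    (n : ℕ) (hn : 1 ≤ n)
    (r1 r2 : Fin n → Set α)
    (h1 : ∀ i : Fin n, (r1 i).Nonempty)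
    (h2 : ∀ i : Fin n, (r2 i).Nonempty) :
    ((∃ i : Fin n, simS sim (r1 i) (r2 i)) ∧
        (fun i : Fin n => r1 i ∪ r2 i) = r2) ↔
      ∀ i : Fin n, r1 i ⊆ r2 i :=
  merge_domination_iff_componentwise_subset_general sim hrefl n hn r1 r2 h1
end
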